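/- Let G be a finite group, p a prime, P an abelian Sylow p-subgroup of G, and x ∈ P. Then Sub_G(x) = ⟨C_G(x), N_G(P)⟩. -/

import Mathlib

variable {G : Type*} [Group G]

/-- `A` is subnormal in `B`: there is a chain `A = s 0 ⊴ s 1 ⊴ ⋯ ⊴ s n = B`. -/
def IsSubnormalIn (A B : Subgroup G) : Prop :=
  ∃ (n : ℕ) (s : ℕ → Subgroup G), s 0 = A ∧ s n = B ∧
    ∀ i < n, s i ≤ s (i + 1) ∧ ∀ g ∈ s (i + 1), ∀ a ∈ s i, g * a * g⁻¹ ∈ s i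

/-- The subnormaliser `Sub_G(x)` of an element `x`. -/
def subnormalizer (x : G) : Subgroup G :=
  Subgroup.closure
    {g : G | IsSubnormalIn (Subgroup.zpowers x) (Subgroup.closure {g, x})}

/-!
If `⟨x⟩` is subnormal in `H = ⟨g, x⟩`, then, being a `p`-group, it lies in a `p`-subgroup `K`
normal in `H`. This is built up along the subnormal series: if `K ⊴ T ⊴ B` with `K` a `p`-group,
the `B`-conjugates of `K` are normal `p`-subgroups of `T`, so their join is a `p`-group normal
in `B`. Hence `x` and `g⁻¹ x g` lie in a common Sylow subgroup `Q`. Being abelian, `P` and `Q`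
both lie in `C_G(x)` and are conjugate there, after which Burnside's fusion theorem in `P` puts
`g` in `C_G(x) N_G(P)`. Conversely, `⟨x⟩ ⊴ ⟨g, x⟩` for `g ∈ C_G(x)`, and
`⟨x⟩ ⊴ P ∩ ⟨g, x⟩ ⊴ ⟨g, x⟩` for `g ∈ N_G(P)`.
-/

open Subgroup

theorem isSubnormalIn_iff {A B : Subgroup G} :
    IsSubnormalIn A B ↔ ∃ (n : ℕ) (s : ℕ → Subgroup G), s 0 = A ∧ s n = B ∧
      ∀ i < n, s i ≤ s (i + 1) ∧ s (i + 1) ≤ normalizer (s i : Set G) := by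
  simp only [IsSubnormalIn, le_normalizer_iff]

namespace IsSubnormalIn

theorem refl (A : Subgroup G) : IsSubnormalIn A A :=
  ⟨0, fun _ ↦ A, rfl, rfl, fun _ h ↦ absurd h (Nat.not_lt_zero _)⟩

theorem trans_normalizer {A M B : Subgroup G} (h : IsSubnormalIn A M) (hMB : M ≤ B)
    (hBM : B ≤ normalizer (M : Set G)) : IsSubnormalIn A B := by
  obtain ⟨n, s, h0, hn, hs⟩ := isSubnormalIn_iff.mp h
  refine isSubnormalIn_iff.mpr ⟨n + 1, Function.update s (n + 1) B, ?_, by simp, ?_⟩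
  · simpa [Function.update_of_ne (Nat.succ_ne_zero n).symm] using h0
  intro i hi
  rcases Nat.lt_succ_iff_lt_or_eq.mp hi with hi | rfl
  · simpa [Function.update_of_ne (by omega : i ≠ n + 1),
      Function.update_of_ne (by omega : i + 1 ≠ n + 1)] using hs i hi
  · simpa [Function.update_of_ne (by omega : i ≠ i + 1), hn] using ⟨hMB, hBM⟩

theorem of_le_normalizer {A B : Subgroup G} (hAB : A ≤ B) (hBA : B ≤ normalizer (A : Set G)) :
    IsSubnormalIn A B :=
  (refl A).trans_normalizer hAB hBA

end IsSubnormalIn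

theorem IsPGroup.iSup_of_le_normalizer {p : ℕ} {ι : Type*} {T : Subgroup G}
    (H : ι → Subgroup G) (hp : ∀ i, IsPGroup p (H i)) (hle : ∀ i, H i ≤ T)
    (hn : ∀ i, T ≤ normalizer (H i : Set G)) : IsPGroup p (⨆ i, H i : Subgroup G) := by
  have hnormal : ∀ i, ((H i).subgroupOf T).Normal := fun i ↦
    (normal_subgroupOf_iff_le_normalizer (hle i)).mpr (hn i)
  have hp' : IsPGroup p (⨆ i, (H i).subgroupOf T : Subgroup T) :=
    Sylow.iSup_of_normal _ fun i ↦ (hp i).comap_subtype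
  have hsup : (⨆ i, (H i).subgroupOf T).map T.subtype = ⨆ i, H i := by
    simp only [Subgroup.map_iSup, map_subgroupOf_eq_of_le (hle _)]
  exact hsup ▸ hp'.map T.subtype

theorem Subgroup.map_conj_map_conj (K : Subgroup G) (b c : G) :
    (K.map (MulAut.conj b : G →* G)).map (MulAut.conj c : G →* G) =
      K.map (MulAut.conj (c * b) : G →* G) := by
  rw [Subgroup.map_map, map_mul]; rfl

theorem IsPGroup.exists_ge_normalized {p : ℕ} {K T B : Subgroup G} (hK : IsPGroup p K)
    (hKT : K ≤ T) (hTK : T ≤ normalizer (K : Set G)) (hBT : B ≤ normalizer (T : Set G)) :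
    ∃ L : Subgroup G, IsPGroup p L ∧ K ≤ L ∧ L ≤ T ∧ B ≤ normalizer (L : Set G) := by
  let conj (b : G) : Subgroup G := K.map (MulAut.conj b : G →* G)
  have hT : ∀ b ∈ B, T.map (MulAut.conj b : G →* G) = T := fun b hb ↦
    mem_normalizer_iff_map_conj_eq.mp (hBT hb)
  have conj_le : ∀ b ∈ B, conj b ≤ T := fun b hb ↦ by
    rw [← hT b hb]
    exact map_mono hKT
  have le_normalizer_conj : ∀ b ∈ B, T ≤ normalizer (conj b : Set G) := fun b hb ↦ by
    rw [← hT b hb]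
    exact (map_mono hTK).trans (map_equiv_normalizer_eq K (MulAut.conj b)).le
  refine ⟨⨆ b : B, conj b,
    iSup_of_le_normalizer _ (fun b ↦ hK.map _) (fun b ↦ conj_le b b.2)
      (fun b ↦ le_normalizer_conj b b.2),
    le_iSup_of_le 1 fun k hk ↦ ⟨k, hk, by simp⟩, iSup_le fun b ↦ conj_le b b.2, fun c hc ↦ ?_⟩
  rw [mem_normalizer_iff_map_conj_eq, Subgroup.map_iSup]
  simp only [conj, Subgroup.map_conj_map_conj]
  exact (Equiv.mulLeft (⟨c, hc⟩ : B)).iSup_comp (g := fun b : B ↦ conj b)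

theorem IsSubnormalIn.exists_isPGroup_ge {p : ℕ} {A B : Subgroup G} (h : IsSubnormalIn A B)
    (hA : IsPGroup p A) :
    ∃ K : Subgroup G, IsPGroup p K ∧ A ≤ K ∧ K ≤ B ∧ B ≤ normalizer (K : Set G) := by
  obtain ⟨n, s, rfl, rfl, hs⟩ := isSubnormalIn_iff.mp h
  suffices ∀ m ≤ n, ∃ K : Subgroup G, IsPGroup p K ∧ s 0 ≤ K ∧ K ≤ s m ∧
      s m ≤ normalizer (K : Set G) from this n le_rfl
  intro m hm
  induction m with
  | zero => exact ⟨s 0, hA, le_rfl, le_rfl, le_normalizer⟩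
  | succ m ih =>
    obtain ⟨K, hK, hAK, hKs, hsK⟩ := ih (by omega)
    obtain ⟨hle, hnorm⟩ := hs m (by omega)
    obtain ⟨L, hL, hKL, hLs, hsL⟩ := hK.exists_ge_normalized hKs hsK hnorm
    exact ⟨L, hL, hAK.trans hKL, hLs.trans hle, hsL⟩

theorem Sylow.exists_mem_smul_eq_of_le {p : ℕ} [Fact p.Prime] [Finite G] {H : Subgroup G}
    {P Q : Sylow p G} (hP : (P : Subgroup G) ≤ H) (hQ : (Q : Subgroup G) ≤ H) :
    ∃ c ∈ H, c • Q = P := by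
  obtain ⟨c, hc⟩ := MulAction.exists_smul_eq H (Q.subtype hQ) (P.subtype hP)
  rw [Sylow.smul_subtype] at hc
  exact ⟨c, c.2, Sylow.subtype_injective hc⟩

theorem Subgroup.le_centralizer_singleton {H : Subgroup G} [IsMulCommutative H] {x : G}
    (hx : x ∈ H) : H ≤ centralizer {x} :=
  H.le_centralizer.trans (centralizer_le (Set.singleton_subset_iff.mpr hx))

theorem Subgroup.centralizer_singleton_le_normalizer_zpowers (x : G) :
    centralizer {x} ≤ normalizer (zpowers x : Set G) := by
  rw [← normalizer_singleton, zpowers_eq_closure]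
  exact normalizer_le_normalizer_closure _

namespace Sylow

variable {p : ℕ} [Fact p.Prime] [Finite G] (P : Sylow p G) [IsMulCommutative (P : Subgroup G)]
  {x g : G}

theorem mem_centralizer_sup_normalizer_of_mem (hx : x ∈ P) (hy : g⁻¹ * x * g ∈ P) :
    g ∈ centralizer {x} ⊔ normalizer (P : Set G) := by
  obtain ⟨n, hn, hconj⟩ := P.conj_eq_normalizer_conj_of_mem x g hx hy
  have hgn : g * n⁻¹ ∈ centralizer {x} := by
    rw [mem_centralizer_singleton_iff]
    calc g * n⁻¹ * x = g * (n⁻¹ * x * n) * n⁻¹ := by group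
      _ = g * (g⁻¹ * x * g) * n⁻¹ := by rw [hconj]
      _ = x * (g * n⁻¹) := by group
  simpa using mul_mem (mem_sup_left hgn) (mem_sup_right hn)

theorem mem_centralizer_sup_normalizer_of_isPGroup {K : Subgroup G} (hK : IsPGroup p K)
    (hxP : x ∈ P) (hxK : x ∈ K) (hyK : g⁻¹ * x * g ∈ K) :
    g ∈ centralizer {x} ⊔ normalizer (P : Set G) := by
  obtain ⟨Q, hKQ⟩ := hK.exists_le_sylow
  obtain ⟨h, rfl⟩ := MulAction.exists_smul_eq G P Q
  have : IsMulCommutative ((h • P : Sylow p G) : Subgroup G) :=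
    map_isMulCommutative (P : Subgroup G) (MulAut.conj h).toMonoidHom
  obtain ⟨c, hc, hcP⟩ := exists_mem_smul_eq_of_le (P.le_centralizer_singleton hxP)
    ((h • P).le_centralizer_singleton (hKQ hxK))
  have hy : (g * c⁻¹)⁻¹ * x * (g * c⁻¹) ∈ (P : Subgroup G) := by
    have := smul_mem_pointwise_smul _ (MulAut.conj c) _ (hKQ hyK)
    rw [← coe_subgroup_smul, hcP] at this
    simpa [mul_assoc] using this
  have hgc := P.mem_centralizer_sup_normalizer_of_mem hxP hy
  simpa using mul_mem hgc (mem_sup_left hc)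

end Sylow

theorem subnormalizer_le_centralizer_sup_normalizer {p : ℕ} [Fact p.Prime] [Finite G]
    (P : Sylow p G) [IsMulCommutative (P : Subgroup G)] {x : G} (hx : x ∈ P) :
    subnormalizer x ≤ centralizer {x} ⊔ normalizer (P : Set G) := by
  refine (closure_le _).mpr fun g hg ↦ ?_
  obtain ⟨K, hK, hxK, -, hK_norm⟩ :=
    IsSubnormalIn.exists_isPGroup_ge hg (P.isPGroup'.to_le (zpowers_le.mpr hx))
  have hxK : x ∈ K := hxK (mem_zpowers x)
  have hg_inv : g⁻¹ ∈ closure {g, x} := inv_mem (subset_closure (Set.mem_insert g _))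
  have hyK : g⁻¹ * x * g ∈ K := by simpa using le_normalizer_iff.mp hK_norm _ hg_inv x hxK
  exact P.mem_centralizer_sup_normalizer_of_isPGroup hK hx hxK hyK

theorem centralizer_sup_normalizer_le_subnormalizer {P : Subgroup G} [IsMulCommutative P]
    {x : G} (hx : x ∈ P) : centralizer {x} ⊔ normalizer (P : Set G) ≤ subnormalizer x := by
  have hx_mem : ∀ g : G, x ∈ closure {g, x} := fun g ↦ subset_closure (by simp)
  refine sup_le (fun g hg ↦ subset_closure ?_) (fun g hg ↦ subset_closure ?_)
  · refine IsSubnormalIn.of_le_normalizer (zpowers_le.mpr (hx_mem g)) ((closure_le _).mpr ?_)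
    exact Set.insert_subset (centralizer_singleton_le_normalizer_zpowers x hg)
      (Set.singleton_subset_iff.mpr (le_normalizer (mem_zpowers x)))
  · have hP : closure {g, x} ≤ normalizer (P : Set G) :=
      (closure_le _).mpr (Set.insert_subset hg (Set.singleton_subset_iff.mpr (le_normalizer hx)))
    refine (IsSubnormalIn.of_le_normalizer (B := P ⊓ closure {g, x}) ?_ ?_).trans_normalizer
      inf_le_right ((le_inf hP le_normalizer).trans inf_normalizer_le_normalizer_inf)
    · exact zpowers_le.mpr ⟨hx, hx_mem g⟩
    · exact inf_le_left.trans
        ((P.le_centralizer_singleton hx).trans (centralizer_singleton_le_normalizer_zpowers x))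

theorem stmt_12 [Fintype G] {p : ℕ} (hp : p.Prime)
    (P : Sylow p G) (hP : IsMulCommutative (P : Subgroup G))
    (x : G) (hx : x ∈ P) :
    subnormalizer x = Subgroup.centralizer {x} ⊔ Subgroup.normalizer ((P : Subgroup G) : Set G) := by
  have : Fact p.Prime := ⟨hp⟩
  exact le_antisymm (subnormalizer_le_centralizer_sup_normalizer P hx)
    (centralizer_sup_normalizer_le_subnormalizer hx)
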